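/- Let n = 2. In Ẽ'₂, define h_{1,1} = −(−d)⁻¹[F_{0,0},F_{1,0}]_{q²}, h_{0,1} = −(−d)⁻¹[F_{1,1},F_{0,−1}]_{q²}, h_{1,−1} = −(−d)[E_{1,0},E_{0,0}]_{q⁻²}, h_{0,−1} = −(−d)[E_{0,1},E_{1,−1}]_{q⁻²} (these equal θ⁻¹(H_{i,±1})), and set h̃_{0,1} = −a·K̃₀⁻¹F̃_{0,0}, h̃_{0,−1} = −K̃₀Ẽ_{0,0} where a = q(1−q̃₁)(1−q̃₃), q̃₁ = q₁², q̃₃ = q₁⁻¹q₃ (these are θ̃⁻¹(H̃_{0,±1}) for the fused copy E^{0|1}₁ ⊂ Ẽ'₂). Then h̃_{0,1} ≡ h_{0,1} + q₁h_{1,1} mod 𝒩_{≥1} and h̃_{0,−1} ≡ h_{0,−1} + q₁⁻¹h_{1,−1} mod 𝒩_{≥1}. -/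

import Mathlib

/-!
Common framework: quantum affine `gl_n` (Drinfeld realization) and the quantum
toroidal `gl_n` algebra, encoded as structures listing the generators (Fourier
components of the currents) and the defining relations written componentwise.
-/

noncomputable section
open scoped BigOperators

namespace QTor

/-- The quantum integer `[m] = (q^m - q^{-m})/(q - q⁻¹)`. -/
def qint (q : ℂ) (m : ℤ) : ℂ := (q ^ m - q ^ (-m)) / (q - q⁻¹)

/-- The genericity assumption on `q₁ = q⁻¹d`, `q₂ = q²`, `q₃ = q⁻¹d⁻¹`:
`q₁^a q₂^b q₃^c = 1` holds only if `a = b = c`. -/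
def Generic (q d : ℂ) : Prop :=
  ∀ a b c : ℤ, (q⁻¹ * d) ^ a * (q ^ 2) ^ b * (q⁻¹ * d⁻¹) ^ c = 1 → a = b ∧ b = c

/-- Coefficient of `t^m` in `exp (∑_{r ≥ 1} c r t^r)` (a finite expression). -/
def expCoeff {A : Type*} [Ring A] [Algebra ℂ A] (c : ℕ → A) (m : ℕ) : A :=
  ∑ k ∈ Finset.range (m + 1),
    ((k.factorial : ℂ)⁻¹) •
      (PowerSeries.coeff m
        ((PowerSeries.mk fun r => if r = 0 then 0 else c r) ^ k))

/-- Entries of the Cartan matrix of type `A^{(1)}_{n-1}` (with `a_{00} = 0` for `n = 1`). -/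
def acar (n : ℕ) (i j : ZMod n) : ℤ :=
  (if i = j then 2 else 0) - (if i = j + 1 then 1 else 0) - (if i + 1 = j then 1 else 0)

/-- Coordinates of the simple root `α_i = ε_{i-1} - ε_i` in the weight lattice `P`. -/
def alphaRt (n : ℕ) (i : ZMod n) : ZMod n → ℤ :=
  fun j => (if j = i - 1 then 1 else 0) - (if j = i then 1 else 0)

def bsgn : Bool → ℤ
  | true => 1
  | false => -1

/-- `[a,[b,c]_q]_{q⁻¹}`. -/
def ser3 {A : Type*} [Ring A] [Algebra ℂ A] (q : ℂ) (a b c : A) : A :=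
  a * b * c - q • (a * c * b) - q⁻¹ • (b * c * a) + c * b * a

/-- `[a,[b,[c,e]_p]]_{p⁻¹}`. -/
def ser4 {A : Type*} [Ring A] [Algebra ℂ A] (p : ℂ) (a b c e : A) : A :=
  a * (b * (c * e - p • (e * c)) - (c * e - p • (e * c)) * b)
    - p⁻¹ • ((b * (c * e - p • (e * c)) - (c * e - p • (e * c)) * b) * a)

/-- `[a,[b,c]]`. -/
def comm3 {A : Type*} [Ring A] (a b c : A) : A :=
  a * (b * c - c * b) - (b * c - c * b) * a

/-- The quantum affine algebra `U'_q(gl_n^)` in the Drinfeld realization: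
a `ℂ`-algebra `A` equipped with elements `x^±_{i,k}` (`i ≠ 0`), `h_{j,r}`,
`q^h` (`h ∈ P`), powers of the central element `C`, and the coefficients of
`φ_i^±(z)`, subject to the standard Drinfeld relations (componentwise). -/
structure QAffineOn (n : ℕ) (q d : ℂ) (A : Type*) [Ring A] [Algebra ℂ A] where
  x : Bool → ZMod n → ℤ → A
  hgen : ZMod n → ℤ → A
  qh : (ZMod n → ℤ) → A
  Cz : ℤ → A
  phiP : ZMod n → ℤ → A
  phiM : ZMod n → ℤ → A
  Cz_zero : Cz 0 = 1
  Cz_add : ∀ r s, Cz (r + s) = Cz r * Cz s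
  Cz_comm : ∀ (r : ℤ) (a : A), Cz r * a = a * Cz r
  qh_zero : qh 0 = 1
  qh_add : ∀ v w, qh (v + w) = qh v * qh w
  qh_x : ∀ (v : ZMod n → ℤ) (ε : Bool) (i : ZMod n) (k : ℤ), i ≠ 0 →
    qh v * x ε i k = (q ^ (bsgn ε * (v (i - 1) - v i))) • (x ε i k * qh v)
  qh_h : ∀ v j r, qh v * hgen j r = hgen j r * qh v
  h_h : ∀ (i j : ZMod n) (r s : ℤ), r ≠ 0 → s ≠ 0 →
    hgen i r * hgen j s - hgen j s * hgen i r =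
      (if r + s = 0 then qint q (r * acar n i j) / ((r : ℂ) * (q - q⁻¹)) else 0) •
        (Cz r - Cz (-r))
  h_x : ∀ (ε : Bool) (i j : ZMod n) (r k : ℤ), r ≠ 0 → j ≠ 0 →
    hgen i r * x ε j k - x ε j k * hgen i r =
      ((bsgn ε : ℂ) * (qint q (r * acar n i j) / qint q r)) •
        (Cz (-(if ε then max r 0 else min r 0)) * x ε j (k + r))
  phiP_def : ∀ i s, phiP i s =
    if s < 0 then 0 else
      qh (alphaRt n i) * expCoeff (fun r => (q - q⁻¹) • hgen i (r : ℤ)) s.toNat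
  phiM_def : ∀ i s, phiM i s =
    if s < 0 then 0 else
      qh (-(alphaRt n i)) * expCoeff (fun r => (-(q - q⁻¹)) • hgen i (-(r : ℤ))) s.toNat
  xp_xm : ∀ (i j : ZMod n) (k l : ℤ), i ≠ 0 → j ≠ 0 →
    x true i k * x false j l - x false j l * x true i k =
      (if i = j then ((q - q⁻¹)⁻¹ : ℂ) else 0) •
        (Cz k * phiP i (k + l) - Cz l * phiM i (-(k + l)))
  xx_quad : ∀ (ε : Bool) (i j : ZMod n) (k l : ℤ), i ≠ 0 → j ≠ 0 →
    x ε i (k + 1) * x ε j l - (q ^ (bsgn ε * acar n i j)) • (x ε i k * x ε j (l + 1))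
      + x ε j (l + 1) * x ε i k - (q ^ (bsgn ε * acar n i j)) • (x ε j l * x ε i (k + 1)) = 0
  xx_comm : ∀ (ε : Bool) (i j : ZMod n) (k l : ℤ), i ≠ 0 → j ≠ 0 → acar n i j = 0 →
    Commute (x ε i k) (x ε j l)
  serre : ∀ (ε : Bool) (i j : ZMod n) (k₁ k₂ l : ℤ), i ≠ 0 → j ≠ 0 → acar n i j = -1 →
    ser3 q (x ε i k₁) (x ε i k₂) (x ε j l) + ser3 q (x ε i k₂) (x ε i k₁) (x ε j l) = 0

namespace QAffineOn

variable {n : ℕ} {q d : ℂ} {A : Type*} [Ring A] [Algebra ℂ A]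

/-- Coefficients of the current `E_i(z) = x_i^+(d^i z)`. -/
def Ecur (S : QAffineOn n q d A) (i : ZMod n) (k : ℤ) : A :=
  (d ^ (-((i.val : ℤ) * k))) • S.x true i k

/-- Coefficients of the current `F_i(z) = x_i^-(d^i z)`. -/
def Fcur (S : QAffineOn n q d A) (i : ZMod n) (k : ℤ) : A :=
  (d ^ (-((i.val : ℤ) * k))) • S.x false i k

/-- `H_{i,r} = d^{-ir} h_{i,r}`, so that `K_i^±(z) = φ_i^±(d^i z)`. -/
def Hcur (S : QAffineOn n q d A) (i : ZMod n) (r : ℤ) : A :=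
  (d ^ (-((i.val : ℤ) * r))) • S.hgen i r

/-- Coefficient of `z^{-s}` in `K_i^+(z) = φ_i^+(d^i z)`. -/
def KPcur (S : QAffineOn n q d A) (i : ZMod n) (s : ℤ) : A :=
  (d ^ (-((i.val : ℤ) * s))) • S.phiP i s

/-- Coefficient of `z^{s}` in `K_i^-(z) = φ_i^-(d^i z)`. -/
def KMcur (S : QAffineOn n q d A) (i : ZMod n) (s : ℤ) : A :=
  (d ^ ((i.val : ℤ) * s)) • S.phiM i s

/-- The Heisenberg elements `Z_r = ∑_i ((q^{ir}+q^{(n-i)r})/(q^r-q^{-r})) h_{i,r}`. -/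
def Zelt (S : QAffineOn n q d A) (r : ℤ) : A :=
  ∑ i ∈ Finset.range n,
    (((q ^ ((i : ℤ) * r) + q ^ (((n : ℤ) - i) * r)) / (q ^ r - q ^ (-r)))) •
      S.hgen (i : ZMod n) r

/-- Monomials in the generators, together with their homogeneous degree
(`deg x^±_{i,k} = k`, `deg h_{j,r} = r`, `deg q^h = deg C = 0`). -/
inductive Mon (S : QAffineOn n q d A) : A → ℤ → Prop
  | one : Mon S 1 0
  | mx : ∀ (m : A) (dg : ℤ) (ε i k), Mon S m dg → Mon S (m * S.x ε i k) (dg + k)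
  | mh : ∀ (m : A) (dg : ℤ) (i r), Mon S m dg → Mon S (m * S.hgen i r) (dg + r)
  | mqh : ∀ (m : A) (dg : ℤ) (v), Mon S m dg → Mon S (m * S.qh v) dg
  | mC : ∀ (m : A) (dg r : ℤ), Mon S m dg → Mon S (m * S.Cz r) dg

/-- The left ideal `𝒩_{≥ r}` generated by the elements of homogeneous degree `≥ r`. -/
def Nideal (S : QAffineOn n q d A) (r : ℤ) : Submodule ℂ A :=
  Submodule.span ℂ {z | ∃ a m dg, r ≤ dg ∧ S.Mon m dg ∧ z = a * m}

/-- The degree-`k` homogeneous component (the span of degree-`k` monomials). -/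
def grade (S : QAffineOn n q d A) (k : ℤ) : Submodule ℂ A :=
  Submodule.span ℂ {m | S.Mon m k}

end QAffineOn

/-- A homomorphism matching up two Drinfeld-presentation structures on the generators. -/
def AffMapsGens {n : ℕ} {q d : ℂ} {A B : Type*} [Ring A] [Algebra ℂ A] [Ring B] [Algebra ℂ B]
    (s : QAffineOn n q d A) (t : QAffineOn n q d B) (φ : A →ₐ[ℂ] B) : Prop :=
  (∀ ε i k, φ (s.x ε i k) = t.x ε i k) ∧ (∀ i r, φ (s.hgen i r) = t.hgen i r) ∧
    (∀ v, φ (s.qh v) = t.qh v) ∧ (∀ r, φ (s.Cz r) = t.Cz r)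

/-- `U'_q(gl_n^)` (the universal algebra on the Drinfeld presentation). -/
def QAffineOn.IsUniversal {n : ℕ} {q d : ℂ} {A : Type*} [Ring A] [Algebra ℂ A]
    (s : QAffineOn n q d A) : Prop :=
  ∀ (B : Type) (_ : Ring B) (_ : Algebra ℂ B) (t : QAffineOn n q d B),
    ∃! φ : A →ₐ[ℂ] B, AffMapsGens s t φ

/-- `q₁ = q⁻¹ d`. -/
def q1 (q d : ℂ) : ℂ := q⁻¹ * d

/-- `q₃ = q⁻¹ d⁻¹`. -/
def q3 (q d : ℂ) : ℂ := q⁻¹ * d⁻¹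

/-- Degree of the structure polynomial `g_{ij}(z,w)` of the toroidal algebra. -/
def gdeg (n : ℕ) (i j : ZMod n) : ℕ :=
  if n = 1 then 3 else if n = 2 then (if i = j then 1 else 2) else 1

/-- Coefficients of `g_{ij}(z,w) = ∑_t (gcoef t) z^{deg-t} w^t`.  For `n ≥ 3`,
`g_{ij}(z,w) = z - q₁ w, z - q₂ w, z - q₃ w, z - w` according as
`i ≡ j-1, j, j+1`, otherwise; for `n = 2` the off-diagonal `g` is
`(z - q₁ w)(z - q₃ w)`, and for `n = 1` it is `(z-q₁w)(z-q₂w)(z-q₃w)`. -/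
def gcoef (n : ℕ) (q d : ℂ) (i j : ZMod n) (t : ℕ) : ℂ :=
  if n = 1 then
    (if t = 0 then 1 else if t = 1 then -(q1 q d + q ^ 2 + q3 q d)
      else if t = 2 then q1 q d * q ^ 2 + q1 q d * q3 q d + q ^ 2 * q3 q d
      else if t = 3 then -(q1 q d * q ^ 2 * q3 q d) else 0)
  else if n = 2 then
    (if i = j then (if t = 0 then 1 else if t = 1 then -(q ^ 2) else 0)
      else (if t = 0 then 1 else if t = 1 then -(q1 q d + q3 q d)
        else if t = 2 then q1 q d * q3 q d else 0))
  else
    (if t = 0 then 1 else if t = 1 then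
      -(if i = j then q ^ 2 else if i + 1 = j then q1 q d
        else if i = j + 1 then q3 q d else 1)
      else 0)

/-- The constants `d_{ij}` of the toroidal algebra. -/
def dcoef (n : ℕ) (d : ℂ) (i j : ZMod n) : ℂ :=
  if n = 1 then 1
  else if n = 2 then (if i = j then 1 else -1)
  else if i + 1 = j then d⁻¹ else if i = j + 1 then d else 1

/-- The quantum toroidal algebra `E'_n(q₁,q₂,q₃)` (with `q₁ = q⁻¹d`, `q₂ = q²`,
`q₃ = q⁻¹d⁻¹`): a `ℂ`-algebra equipped with the Fourier components of the currents
`E_i(z), F_i(z), K_i^±(z)`, elements `H_{i,r}`, `q^h`, powers of the central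
element `C`, subject to the standard defining relations (componentwise). -/
structure TorOn (n : ℕ) (q d : ℂ) (A : Type*) [Ring A] [Algebra ℂ A] where
  Ee : ZMod n → ℤ → A
  Ff : ZMod n → ℤ → A
  Hh : ZMod n → ℤ → A
  qh : (ZMod n → ℤ) → A
  Cz : ℤ → A
  KP : ZMod n → ℤ → A
  KM : ZMod n → ℤ → A
  Cz_zero : Cz 0 = 1
  Cz_add : ∀ r s, Cz (r + s) = Cz r * Cz s
  Cz_comm : ∀ (r : ℤ) (a : A), Cz r * a = a * Cz r
  qh_zero : qh 0 = 1
  qh_add : ∀ v w, qh (v + w) = qh v * qh w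
  qh_E : ∀ (v : ZMod n → ℤ) (i : ZMod n) (k : ℤ),
    qh v * Ee i k = (q ^ (v (i - 1) - v i)) • (Ee i k * qh v)
  qh_F : ∀ (v : ZMod n → ℤ) (i : ZMod n) (k : ℤ),
    qh v * Ff i k = (q ^ (-(v (i - 1) - v i))) • (Ff i k * qh v)
  qh_H : ∀ v i r, qh v * Hh i r = Hh i r * qh v
  KP_def : ∀ i s, KP i s =
    if s < 0 then 0 else
      qh (alphaRt n i) * expCoeff (fun r => (q - q⁻¹) • Hh i (r : ℤ)) s.toNat
  KM_def : ∀ i s, KM i s =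
    if s < 0 then 0 else
      qh (-(alphaRt n i)) * expCoeff (fun r => (-(q - q⁻¹)) • Hh i (-(r : ℤ))) s.toNat
  KK_PP : ∀ i j s t, Commute (KP i s) (KP j t)
  KK_MM : ∀ i j s t, Commute (KM i s) (KM j t)
  KK_MP : ∀ (i j : ZMod n) (k l : ℤ),
    (∑ t ∈ Finset.range 4, ∑ s ∈ Finset.range 4,
      (gcoef n q d i j t * gcoef n q d j i s) •
        (Cz (-(gdeg n i j : ℤ) + t + s) *
          (KM i (-k - (gdeg n i j : ℤ) + t - s) * KP j (l + t + (gdeg n j i : ℤ) - s)))) =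
    (∑ t ∈ Finset.range 4, ∑ s ∈ Finset.range 4,
      (gcoef n q d j i s * gcoef n q d i j t) •
        (Cz ((gdeg n i j : ℤ) - t - s) *
          (KP j (l + (gdeg n j i : ℤ) - s + t) * KM i (-k - s - (gdeg n i j : ℤ) + t))))
  KE_P : ∀ (i j : ZMod n) (k l : ℤ),
    dcoef n d i j • (∑ t ∈ Finset.range 4, gcoef n q d i j t •
      (Cz (k + (gdeg n i j : ℤ) - t) * (KP i (k + (gdeg n i j : ℤ) - t) * Ee j (l + t))))
    + (∑ s ∈ Finset.range 4, gcoef n q d j i s •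
      (Ee j (l + (gdeg n j i : ℤ) - s) * (Cz (k + s) * KP i (k + s)))) = 0
  KE_M : ∀ (i j : ZMod n) (k l : ℤ),
    dcoef n d i j • (∑ t ∈ Finset.range 4, gcoef n q d i j t •
      (KM i (-(k + (gdeg n i j : ℤ) - t)) * Ee j (l + t)))
    + (∑ s ∈ Finset.range 4, gcoef n q d j i s •
      (Ee j (l + (gdeg n j i : ℤ) - s) * KM i (-(k + s)))) = 0
  KF_P : ∀ (i j : ZMod n) (k l : ℤ),
    dcoef n d j i • (∑ s ∈ Finset.range 4, gcoef n q d j i s •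
      (KP i (k + s) * Ff j (l + (gdeg n j i : ℤ) - s)))
    + (∑ t ∈ Finset.range 4, gcoef n q d i j t •
      (Ff j (l + t) * KP i (k + (gdeg n i j : ℤ) - t))) = 0
  KF_M : ∀ (i j : ZMod n) (k l : ℤ),
    dcoef n d j i • (∑ s ∈ Finset.range 4, gcoef n q d j i s •
      (Cz (k + s) * (KM i (-(k + s)) * Ff j (l + (gdeg n j i : ℤ) - s))))
    + (∑ t ∈ Finset.range 4, gcoef n q d i j t •
      (Ff j (l + t) * (Cz (k + (gdeg n i j : ℤ) - t) * KM i (-(k + (gdeg n i j : ℤ) - t))))) = 0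
  EF : ∀ (i j : ZMod n) (k l : ℤ),
    Ee i k * Ff j l - Ff j l * Ee i k =
      (if i = j then ((q - q⁻¹)⁻¹ : ℂ) else 0) •
        (Cz k * KP i (k + l) - Cz l * KM i (-(k + l)))
  EE : ∀ (i j : ZMod n) (k l : ℤ),
    dcoef n d i j • (∑ t ∈ Finset.range 4, gcoef n q d i j t •
      (Ee i (k + (gdeg n i j : ℤ) - t) * Ee j (l + t)))
    + (∑ s ∈ Finset.range 4, gcoef n q d j i s •
      (Ee j (l + (gdeg n j i : ℤ) - s) * Ee i (k + s))) = 0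
  FF : ∀ (i j : ZMod n) (k l : ℤ),
    dcoef n d j i • (∑ s ∈ Finset.range 4, gcoef n q d j i s •
      (Ff i (k + s) * Ff j (l + (gdeg n j i : ℤ) - s)))
    + (∑ t ∈ Finset.range 4, gcoef n q d i j t •
      (Ff j (l + t) * Ff i (k + (gdeg n i j : ℤ) - t))) = 0
  EE_comm : ∀ (i j : ZMod n) (k l : ℤ), i ≠ j → i ≠ j + 1 → i + 1 ≠ j →
    Commute (Ee i k) (Ee j l)
  FF_comm : ∀ (i j : ZMod n) (k l : ℤ), i ≠ j → i ≠ j + 1 → i + 1 ≠ j →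
    Commute (Ff i k) (Ff j l)
  serreE3 : 3 ≤ n → ∀ (i j : ZMod n), (j = i + 1 ∨ j = i - 1) → ∀ (k₁ k₂ l : ℤ),
    ser3 q (Ee i k₁) (Ee i k₂) (Ee j l) + ser3 q (Ee i k₂) (Ee i k₁) (Ee j l) = 0
  serreF3 : 3 ≤ n → ∀ (i j : ZMod n), (j = i + 1 ∨ j = i - 1) → ∀ (k₁ k₂ l : ℤ),
    ser3 q (Ff i k₁) (Ff i k₂) (Ff j l) + ser3 q (Ff i k₂) (Ff i k₁) (Ff j l) = 0
  serreE2 : n = 2 → ∀ (i j : ZMod n), i ≠ j → ∀ (k : Fin 3 → ℤ) (l : ℤ),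
    ∑ π : Equiv.Perm (Fin 3),
      ser4 (q ^ 2) (Ee i (k (π 0))) (Ee i (k (π 1))) (Ee i (k (π 2))) (Ee j l) = 0
  serreF2 : n = 2 → ∀ (i j : ZMod n), i ≠ j → ∀ (k : Fin 3 → ℤ) (l : ℤ),
    ∑ π : Equiv.Perm (Fin 3),
      ser4 (q ^ 2) (Ff i (k (π 0))) (Ff i (k (π 1))) (Ff i (k (π 2))) (Ff j l) = 0
  serreE1 : n = 1 → ∀ (k : Fin 3 → ℤ),
    ∑ π : Equiv.Perm (Fin 3),
      comm3 (Ee 0 (k (π 0))) (Ee 0 (k (π 1) + 1)) (Ee 0 (k (π 2) - 1)) = 0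
  serreF1 : n = 1 → ∀ (k : Fin 3 → ℤ),
    ∑ π : Equiv.Perm (Fin 3),
      comm3 (Ff 0 (k (π 0))) (Ff 0 (k (π 1) + 1)) (Ff 0 (k (π 2) - 1)) = 0

namespace TorOn

variable {n : ℕ} {q d : ℂ} {A : Type*} [Ring A] [Algebra ℂ A]

/-- Monomials in the generators together with their homogeneous degree
(`deg E_{i,k} = deg F_{i,k} = k`, `deg H_{i,r} = r`, `deg q^h = deg C = 0`). -/
inductive Mon (S : TorOn n q d A) : A → ℤ → Prop
  | one : Mon S 1 0
  | mE : ∀ (m : A) (dg : ℤ) (i k), Mon S m dg → Mon S (m * S.Ee i k) (dg + k)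
  | mF : ∀ (m : A) (dg : ℤ) (i k), Mon S m dg → Mon S (m * S.Ff i k) (dg + k)
  | mH : ∀ (m : A) (dg : ℤ) (i r), Mon S m dg → Mon S (m * S.Hh i r) (dg + r)
  | mqh : ∀ (m : A) (dg : ℤ) (v), Mon S m dg → Mon S (m * S.qh v) dg
  | mC : ∀ (m : A) (dg r : ℤ), Mon S m dg → Mon S (m * S.Cz r) dg

/-- The left ideal `𝒩_{≥ r}` of (the completion of) `E'_n` generated by the
elements of homogeneous degree `≥ r`. -/
def Nideal (S : TorOn n q d A) (r : ℤ) : Submodule ℂ A :=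
  Submodule.span ℂ {z | ∃ a m dg, r ≤ dg ∧ S.Mon m dg ∧ z = a * m}

/-- The degree-`k` homogeneous component. -/
def grade (S : TorOn n q d A) (k : ℤ) : Submodule ℂ A :=
  Submodule.span ℂ {m | S.Mon m k}

end TorOn

/-- A homomorphism matching up two toroidal structures on the generators. -/
def TorMapsGens {n : ℕ} {q d : ℂ} {A B : Type*} [Ring A] [Algebra ℂ A] [Ring B] [Algebra ℂ B]
    (s : TorOn n q d A) (t : TorOn n q d B) (φ : A →ₐ[ℂ] B) : Prop :=
  (∀ i k, φ (s.Ee i k) = t.Ee i k) ∧ (∀ i k, φ (s.Ff i k) = t.Ff i k) ∧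
    (∀ i r, φ (s.Hh i r) = t.Hh i r) ∧ (∀ v, φ (s.qh v) = t.qh v) ∧
    (∀ r, φ (s.Cz r) = t.Cz r)

/-- `E'_n(q₁,q₂,q₃)` (the universal algebra on the toroidal presentation). -/
def TorOn.IsUniversal {n : ℕ} {q d : ℂ} {A : Type*} [Ring A] [Algebra ℂ A]
    (s : TorOn n q d A) : Prop :=
  ∀ (B : Type) (_ : Ring B) (_ : Algebra ℂ B) (t : TorOn n q d B),
    ∃! φ : A →ₐ[ℂ] B, TorMapsGens s t φ

/-- Net-convergence (over finite partial sums) of a family `t` of elements of `A`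
to `u` in the completion `U`, with respect to a family of submodules `NU`. -/
def NetLim {A U : Type*} [Ring A] [Algebra ℂ A] [Ring U] [Algebra ℂ U]
    (ι : A →ₐ[ℂ] U) (NU : ℤ → Submodule ℂ U) {κ : Type*} [DecidableEq κ]
    (t : κ → A) (u : U) : Prop :=
  ∀ r : ℤ, ∃ S₀ : Finset κ, ∀ S : Finset κ, S₀ ⊆ S → u - ι (∑ j ∈ S, t j) ∈ NU r

/-- The image of the filtration `𝒩_{≥ r}` in the completion. -/
def NUof {A U : Type*} [Ring A] [Algebra ℂ A] [Ring U] [Algebra ℂ U]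
    (ι : A →ₐ[ℂ] U) (N : ℤ → Submodule ℂ A) (r : ℤ) : Submodule ℂ U :=
  Submodule.span ℂ (ι '' (N r : Set A))

end QTor

namespace QTor

variable {q d : ℂ} {A : Type*} [Ring A] [Algebra ℂ A]

/-- `[a,b]_p = ab - p·ba`. -/
def brq (p : ℂ) (a b : A) : A := a * b - p • (b * a)

/-- The `j`-th term of the expansion of `(1-q₁⁻¹q₃)E^{(1)}_{0|1,l}` (`n = 2`);
the full fused component is `Ẽ_{0,l} = -(qq₁⁻¹q₃)⁻¹ ∑_j` of these terms. -/
def fusE2term (S : TorOn 2 q d A) (l : ℤ) (j : ℕ) : A :=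
  ((q1 q d) ^ ((j : ℤ) - l)) •
      (S.Ee 0 (l - j) * S.Ee 1 j
        - (q1 q d + q3 q d) • (S.Ee 0 (l - j - 1) * S.Ee 1 (j + 1))
        + (q1 q d * q3 q d) • (S.Ee 0 (l - j - 2) * S.Ee 1 (j + 2)))
    + (if 1 ≤ j then
        ((q1 q d) ^ (-(j : ℤ) - l)) •
          ((q1 q d * q3 q d) • (S.Ee 1 (-(j : ℤ)) * S.Ee 0 (j + l))
            - (q1 q d + q3 q d) • (S.Ee 1 (-(j : ℤ) + 1) * S.Ee 0 (l + j - 1))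
            + S.Ee 1 (-(j : ℤ) + 2) * S.Ee 0 (j + l - 2))
      else 0)

/-- The `j`-th term of the expansion of `(1-q₁q₃⁻¹)F^{(1)}_{0|1,l}` (`n = 2`);
the full fused component is `F̃_{0,l} = (1-q₁²)⁻¹(1-q₁q₃⁻¹)⁻¹ ∑_j` of these terms. -/
def fusF2term (S : TorOn 2 q d A) (l : ℤ) (j : ℕ) : A :=
  ((q1 q d) ^ (-(j : ℤ) - l)) •
      (S.Ff 1 (-(j : ℤ)) * S.Ff 0 (l + j)
        - ((q1 q d)⁻¹ + (q3 q d)⁻¹) • (S.Ff 1 (-(j : ℤ) - 1) * S.Ff 0 (l + j + 1))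
        + ((q1 q d)⁻¹ * (q3 q d)⁻¹) • (S.Ff 1 (-(j : ℤ) - 2) * S.Ff 0 (l + j + 2)))
    + (if 1 ≤ j then
        ((q1 q d) ^ ((j : ℤ) - l)) •
          (((q1 q d)⁻¹ * (q3 q d)⁻¹) • (S.Ff 0 (l - j) * S.Ff 1 j)
            - ((q1 q d)⁻¹ + (q3 q d)⁻¹) • (S.Ff 0 (l - j + 1) * S.Ff 1 (j - 1))
            + S.Ff 0 (l - j + 2) * S.Ff 1 (j - 2))
      else 0)

/-- `θ⁻¹(H_{1,1}) = -(-d)⁻¹ [F_{0,0},F_{1,0}]_{q²}` (for `n = 2`). -/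
def h11can (S : TorOn 2 q d A) : A := (-((-d)⁻¹)) • brq (q ^ 2) (S.Ff 0 0) (S.Ff 1 0)

/-- `θ⁻¹(H_{0,1}) = -(-d)⁻¹ [F_{1,1},F_{0,-1}]_{q²}` (for `n = 2`). -/
def h01can (S : TorOn 2 q d A) : A := (-((-d)⁻¹)) • brq (q ^ 2) (S.Ff 1 1) (S.Ff 0 (-1))

/-- `θ⁻¹(H_{1,-1}) = -(-d) [E_{1,0},E_{0,0}]_{q⁻²}` (for `n = 2`). -/
def h1m1can (S : TorOn 2 q d A) : A := (-(-d)) • brq (q ^ (-2 : ℤ)) (S.Ee 1 0) (S.Ee 0 0)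

/-- `θ⁻¹(H_{0,-1}) = -(-d) [E_{0,1},E_{1,-1}]_{q⁻²}` (for `n = 2`). -/
def h0m1can (S : TorOn 2 q d A) : A := (-(-d)) • brq (q ^ (-2 : ℤ)) (S.Ee 0 1) (S.Ee 1 (-1))

/-- The constant term `K̃₀ = K₀K₁` of `K̃₀^±(z) = K₀^±(q₁z)K₁^±(z)`. -/
def Kt0 (S : TorOn 2 q d A) : A := S.qh (fun j => alphaRt 2 0 j + alphaRt 2 1 j)

/-- `K̃₀⁻¹`. -/
def Kt0inv (S : TorOn 2 q d A) : A := S.qh (fun j => -(alphaRt 2 0 j + alphaRt 2 1 j))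

/-- The `M`-th truncation of `h̃_{0,1} = θ̃⁻¹(H̃_{0,1}) = -a K̃₀⁻¹ F̃_{0,0}`,
where `a = q(1-q̃₁)(1-q̃₃)`, `q̃₁ = q₁²`, `q̃₃ = q₁⁻¹q₃`. -/
def ht01 (S : TorOn 2 q d A) (M : ℕ) : A :=
  (-(q * (1 - (q1 q d) ^ 2) * (1 - (q1 q d)⁻¹ * q3 q d)) *
      ((1 - (q1 q d) ^ 2)⁻¹ * (1 - q1 q d * (q3 q d)⁻¹)⁻¹)) •
    (Kt0inv S * ∑ j ∈ Finset.range M, fusF2term S 0 j)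

/-- The `M`-th truncation of `h̃_{0,-1} = θ̃⁻¹(H̃_{0,-1}) = -K̃₀ Ẽ_{0,0}`. -/
def ht0m1 (S : TorOn 2 q d A) (M : ℕ) : A :=
  ((q * (q1 q d)⁻¹ * q3 q d)⁻¹) • (Kt0 S * ∑ j ∈ Finset.range M, fusE2term S 0 j)

end QTor

open QTor

/-!
Modulo `𝒩_{≥1}` only finitely many summands of the fused zero modes `F̃_{0,0}`, `Ẽ_{0,0}`
survive: a product whose right factor has positive mode lies in the left ideal, which
disposes of all summands with `j ≥ 3`. For `n = 2` one has `α₀ + α₁ = 0`, so `K̃₀ = 1`,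
and by genericity the normalising constants collapse to `q q₁⁻¹ q₃` and its inverse.
What remains of `h̃_{0,±1} - (h_{0,±1} + q₁^{±1} h_{1,±1})` is a multiple of the quadratic
`FF` (resp. `EE`) relation between the two colours in modes `(-1,-1)`, whose structure
polynomial is `(z - q₁w)(z - q₃w)`, plus products ending in a positive mode.
-/

theorem Submodule.sum_range_sub_sum_range_mem {R M : Type*} [Ring R] [AddCommGroup M]
    [Module R M] (N : Submodule R M) (f : ℕ → M) {m₀ m : ℕ} (hm : m₀ ≤ m)
    (hf : ∀ j, m₀ ≤ j → f j ∈ N) :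
    ∑ j ∈ Finset.range m, f j - ∑ j ∈ Finset.range m₀, f j ∈ N := by
  rw [← Finset.sum_range_add_sum_Ico f hm, add_sub_cancel_left]
  exact N.sum_mem fun j hj => hf j (Finset.mem_Ico.1 hj).1

namespace QTor

namespace Generic

variable {q d : ℂ}

theorem q1_sq_ne_one (h : Generic q d) : q1 q d ^ 2 ≠ 1 := by
  intro h₁
  have := h 2 0 0 (by simpa [q1] using h₁)
  omega

theorem q1_mul_q3_inv_ne_one (h : Generic q d) : q1 q d * (q3 q d)⁻¹ ≠ 1 := by
  intro h₁
  have := h 1 0 (-1) (by simpa [q1, q3] using h₁)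
  omega

end Generic

namespace TorOn

variable {n : ℕ} {q d : ℂ} {A : Type*} [Ring A] [Algebra ℂ A] (S : TorOn n q d A)

theorem mul_mem_Nideal (a : A) {x : A} {r : ℤ} (hx : x ∈ S.Nideal r) :
    a * x ∈ S.Nideal r := by
  induction hx using Submodule.span_induction with
  | mem x hx =>
    obtain ⟨b, m, dg, hr, hm, rfl⟩ := hx
    exact Submodule.subset_span ⟨a * b, m, dg, hr, hm, (mul_assoc a b m).symm⟩
  | zero => simp
  | add x y _ _ hx hy => simpa [mul_add] using add_mem hx hy
  | smul c x _ hx => simpa using Submodule.smul_mem _ c hx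

theorem mul_Ee_mem_Nideal (a : A) {i : ZMod n} {k r : ℤ} (hk : r ≤ k) :
    a * S.Ee i k ∈ S.Nideal r :=
  Submodule.subset_span ⟨a, S.Ee i k, k, hk, by simpa using Mon.mE (S := S) 1 0 i k .one, rfl⟩

theorem mul_Ff_mem_Nideal (a : A) {i : ZMod n} {k r : ℤ} (hk : r ≤ k) :
    a * S.Ff i k ∈ S.Nideal r :=
  Submodule.subset_span ⟨a, S.Ff i k, k, hk, by simpa using Mon.mF (S := S) 1 0 i k .one, rfl⟩

end TorOn

variable {q d : ℂ} {A : Type*} [Ring A] [Algebra ℂ A] (S : TorOn 2 q d A)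

theorem fusE2term_mem_Nideal {l r : ℤ} {j : ℕ} (hj : r ≤ j) (hl : r + 2 ≤ l + j) :
    fusE2term S l j ∈ S.Nideal r := by
  have mem : ∀ (a : A) i k, r ≤ k → a * S.Ee i k ∈ S.Nideal r :=
    fun a _ _ => S.mul_Ee_mem_Nideal a
  unfold fusE2term
  split_ifs <;> apply_rules [add_mem, sub_mem, Submodule.smul_mem, zero_mem] <;> omega

theorem fusF2term_mem_Nideal {l r : ℤ} {j : ℕ} (hj : r + 2 ≤ j) (hl : r ≤ l + j) :
    fusF2term S l j ∈ S.Nideal r := by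
  have mem : ∀ (a : A) i k, r ≤ k → a * S.Ff i k ∈ S.Nideal r :=
    fun a _ _ => S.mul_Ff_mem_Nideal a
  unfold fusF2term
  split_ifs <;> apply_rules [add_mem, sub_mem, Submodule.smul_mem, zero_mem] <;> omega

theorem ht01_sub_ht01_mem_Nideal {M₀ M : ℕ} {r : ℤ} (hM : M₀ ≤ M)
    (h : ∀ j, M₀ ≤ j → fusF2term S 0 j ∈ S.Nideal r) :
    ht01 S M - ht01 S M₀ ∈ S.Nideal r := by
  rw [ht01, ht01, ← smul_sub, ← mul_sub]
  exact Submodule.smul_mem _ _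
    (S.mul_mem_Nideal _ (Submodule.sum_range_sub_sum_range_mem _ _ hM h))

theorem ht0m1_sub_ht0m1_mem_Nideal {M₀ M : ℕ} {r : ℤ} (hM : M₀ ≤ M)
    (h : ∀ j, M₀ ≤ j → fusE2term S 0 j ∈ S.Nideal r) :
    ht0m1 S M - ht0m1 S M₀ ∈ S.Nideal r := by
  rw [ht0m1, ht0m1, ← smul_sub, ← mul_sub]
  exact Submodule.smul_mem _ _
    (S.mul_mem_Nideal _ (Submodule.sum_range_sub_sum_range_mem _ _ hM h))

theorem Kt0_eq_one : Kt0 S = 1 := by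
  have h : (fun j : ZMod 2 => alphaRt 2 0 j + alphaRt 2 1 j) = 0 := by
    funext j; fin_cases j <;> decide
  rw [Kt0, h, S.qh_zero]

theorem Kt0inv_eq_one : Kt0inv S = 1 := by
  have h : (fun j : ZMod 2 => -(alphaRt 2 0 j + alphaRt 2 1 j)) = 0 := by
    funext j; fin_cases j <;> decide
  rw [Kt0inv, h, S.qh_zero]

theorem ht01_eq (hq : q ≠ 0) (hd : d ≠ 0) (h₁ : q1 q d ^ 2 ≠ 1)
    (h₃ : q1 q d * (q3 q d)⁻¹ ≠ 1) (M : ℕ) :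
    ht01 S M = (q * (q1 q d)⁻¹ * q3 q d) • ∑ j ∈ Finset.range M, fusF2term S 0 j := by
  rw [ht01, Kt0inv_eq_one, one_mul]
  congr 1
  have h₁' : 1 - q1 q d ^ 2 ≠ 0 := sub_ne_zero.2 (Ne.symm h₁)
  have hq1 : q1 q d ≠ 0 := by simp [q1, hq, hd]
  have hq3 : q3 q d ≠ 0 := by simp [q3, hq, hd]
  have h₃' : q3 q d - q1 q d ≠ 0 := fun h =>
    h₃ (by rw [← sub_eq_zero.1 h, mul_inv_cancel₀ hq3])
  field_simp
  ring

theorem ht0m1_eq (M : ℕ) :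
    ht0m1 S M =
      (q * (q1 q d)⁻¹ * q3 q d)⁻¹ • ∑ j ∈ Finset.range M, fusE2term S 0 j := by
  rw [ht0m1, Kt0_eq_one, one_mul]

theorem ht01_three_sub_eq (hq : q ≠ 0) (hd : d ≠ 0) (h₁ : q1 q d ^ 2 ≠ 1)
    (h₃ : q1 q d * (q3 q d)⁻¹ ≠ 1) :
    ht01 S 3 - (h01can S + q1 q d • h11can S) =
      (-(q ^ 4 / d ^ 5)) • (S.Ff 1 (-3) * S.Ff 0 3) + (q ^ 5 / d ^ 4) • (S.Ff 1 (-4) * S.Ff 0 4)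
        + (q ^ 2 / d - 1 / d - d) • (S.Ff 0 (-1) * S.Ff 1 1)
        + q • (S.Ff 0 (-2) * S.Ff 1 2) := by
  have hrel := S.FF 0 1 (-1) (-1)
  rw [ht01_eq S hq hd h₁ h₃]
  linear_combination (norm := skip) (-(q ^ 2 / d)) • hrel
  simp only [fusF2term, h01can, h11can, brq, Finset.sum_range_succ, Finset.sum_range_zero,
    zero_add, gcoef, gdeg, dcoef, q1, q3]
  norm_num
  match_scalars <;> field_simp <;> ring

theorem ht0m1_three_sub_eq (hq : q ≠ 0) (hd : d ≠ 0) :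
    ht0m1 S 3 - (h0m1can S + (q1 q d)⁻¹ • h1m1can S) =
      (-(d ^ 5 / q ^ 4)) • (S.Ee 0 (-3) * S.Ee 1 3) + (d ^ 4 / q ^ 5) • (S.Ee 0 (-4) * S.Ee 1 4)
        + (d / q ^ 2 - d - 1 / d) • (S.Ee 1 (-1) * S.Ee 0 1)
        + q⁻¹ • (S.Ee 1 (-2) * S.Ee 0 2) := by
  have hrel := S.EE 1 0 (-1) (-1)
  rw [ht0m1_eq]
  linear_combination (norm := skip) (-d) • hrel
  simp only [fusE2term, h0m1can, h1m1can, brq, Finset.sum_range_succ, Finset.sum_range_zero,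
    zero_add, gcoef, gdeg, dcoef, q1, q3]
  norm_num
  match_scalars <;> field_simp <;> ring

end QTor

/-- Let `n = 2`.  With `h̃_{0,±1} = θ̃⁻¹(H̃_{0,±1})` of the
fused subalgebra `E^{0|1}₁ ⊂ Ẽ'₂` (`h̃_{0,1} = -aK̃₀⁻¹F̃_{0,0}`,
`h̃_{0,-1} = -K̃₀Ẽ_{0,0}`, `a = q(1-q̃₁)(1-q̃₃)`, `q̃₁ = q₁²`, `q̃₃ = q₁⁻¹q₃`) and
`θ⁻¹(H_{i,±1})` given by the explicit quadratic commutators, one has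
`h̃_{0,1} ≡ θ⁻¹(H_{0,1}) + q₁ θ⁻¹(H_{1,1})` and
`h̃_{0,-1} ≡ θ⁻¹(H_{0,-1}) + q₁⁻¹ θ⁻¹(H_{1,-1})` modulo `𝒩_{≥1}`.
The fused components are truncated at `M`, and the congruences hold for all
sufficiently large `M`. -/
theorem tilde_cartan_projection_n2
    (q d : ℂ) (hq : q ≠ 0) (hd : d ≠ 0) (hgen : Generic q d)
    (A : Type) [Ring A] [Algebra ℂ A] (S : TorOn 2 q d A) :
    (∃ M₀ : ℕ, ∀ M : ℕ, M₀ ≤ M →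
      ht01 S M - (h01can S + (q1 q d) • h11can S) ∈ S.Nideal 1) ∧
    (∃ M₀ : ℕ, ∀ M : ℕ, M₀ ≤ M →
      ht0m1 S M - (h0m1can S + (q1 q d)⁻¹ • h1m1can S) ∈ S.Nideal 1) := by
  refine ⟨⟨3, fun M hM => ?_⟩, ⟨3, fun M hM => ?_⟩⟩
  · rw [← sub_add_sub_cancel _ (ht01 S 3)]
    refine add_mem (ht01_sub_ht01_mem_Nideal S hM
      fun j hj => fusF2term_mem_Nideal S (by omega) (by omega)) ?_
    rw [ht01_three_sub_eq S hq hd hgen.q1_sq_ne_one hgen.q1_mul_q3_inv_ne_one]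
    refine add_mem (add_mem (add_mem ?_ ?_) ?_) ?_ <;>
      exact Submodule.smul_mem _ _ (S.mul_Ff_mem_Nideal _ (by norm_num))
  · rw [← sub_add_sub_cancel _ (ht0m1 S 3)]
    refine add_mem (ht0m1_sub_ht0m1_mem_Nideal S hM
      fun j hj => fusE2term_mem_Nideal S (by omega) (by omega)) ?_
    rw [ht0m1_three_sub_eq S hq hd]
    refine add_mem (add_mem (add_mem ?_ ?_) ?_) ?_ <;>
      exact Submodule.smul_mem _ _ (S.mul_Ee_mem_Nideal _ (by norm_num))
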